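/- Let S be a vertex subset of a finite graph G achieving the maximum deficiency df(S) = od(S) - |S|, and among such sets minimizing Df(S), the total number of vertices in S-components without a perfect matching. Then every even S-component has a perfect matching. -/

import Mathlib

open SimpleGraph Set

variable {V : Type*} [Fintype V] [DecidableEq V]

/-- The vertex set (in `V`) of a connected component of the graph induced on `B`. -/
def compSupp (G : SimpleGraph V) (B : Set V)
    (c : (G.induce B).ConnectedComponent) : Set V :=
  Subtype.val '' c.supp

/-- `A` is (the vertex set of) a connected component of `G` restricted to `B`. -/
def IsCompOf (G : SimpleGraph V) (B : Set V) (A : Set V) : Prop :=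
  ∃ c : (G.induce B).ConnectedComponent, A = compSupp G B c

/-- The number of odd connected components of `G` restricted to `B`. -/
noncomputable def oddComps (G : SimpleGraph V) (B : Set V) : ℕ :=
  Set.ncard {c : (G.induce B).ConnectedComponent | Odd (compSupp G B c).ncard}

/-- The deficiency `df(S) = od(S) - |S|`. -/
noncomputable def df (G : SimpleGraph V) (S : Set V) : ℤ :=
  (oddComps G Sᶜ : ℤ) - S.ncard

/-- The induced subgraph on `A` has a perfect matching. -/
def HasPM (G : SimpleGraph V) (A : Set V) : Prop :=
  ∃ M : Subgraph (G.induce A), M.IsPerfectMatching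

/-- `Df(S)`: total number of vertices in components of `G - S` with no perfect matching. -/
noncomputable def Df (G : SimpleGraph V) (S : Set V) : ℕ :=
  Set.ncard (⋃ c ∈ {c : (G.induce Sᶜ).ConnectedComponent |
    ¬ HasPM G (compSupp G Sᶜ c)}, compSupp G Sᶜ c)

/-- The set of `M`-exposed vertices. -/
def exposed (G : SimpleGraph V) (M : Subgraph G) : Set V :=
  {v | v ∉ M.support}

/-- `A` induces a factor-critical graph. -/
def FactorCritical (G : SimpleGraph V) (A : Set V) : Prop :=
  ∀ v ∈ A, HasPM G (A \ {v})

/-- The neighborhood of `T ⊆ S` in the bipartite minor `⟨G,S⟩`: the odd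
`S`-components adjacent to some vertex of `T`. -/
def minorNbhd (G : SimpleGraph V) (S T : Set V) :
    Set (G.induce Sᶜ).ConnectedComponent :=
  {c | Odd (compSupp G Sᶜ c).ncard ∧ ∃ u ∈ T, ∃ w ∈ compSupp G Sᶜ c, G.Adj u w}

/-- `S` is a Gallai-Edmonds set of `G`. -/
def GallaiEdmonds (G : SimpleGraph V) (S : Set V) : Prop :=
  (∀ c : (G.induce Sᶜ).ConnectedComponent,
      Even (compSupp G Sᶜ c).ncard → HasPM G (compSupp G Sᶜ c)) ∧
  (∀ c : (G.induce Sᶜ).ConnectedComponent,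
      Odd (compSupp G Sᶜ c).ncard → FactorCritical G (compSupp G Sᶜ c)) ∧
  (∀ T ⊆ S, T.Nonempty → T.ncard + 1 ≤ (minorNbhd G S T).ncard)

/-- `w` and `w'` lie in the same `S`-component. -/
def SameComp (G : SimpleGraph V) (S : Set V) (w w' : V) : Prop :=
  ∃ c : (G.induce Sᶜ).ConnectedComponent,
    w ∈ compSupp G Sᶜ c ∧ w' ∈ compSupp G Sᶜ c

/-- `M` is a maximum matching of `G`. -/
def IsMaximumMatching (G : SimpleGraph V) (M : Subgraph G) : Prop :=
  M.IsMatching ∧ ∀ M' : Subgraph G, M'.IsMatching →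
    M'.edgeSet.ncard ≤ M.edgeSet.ncard

/-!
Suppose an even `S`-component `C` has no perfect matching, and move a vertex `v ∈ C` into `S`.
Every other `S`-component survives unchanged, while `C \ {v}` has odd order and therefore
contains an odd component of `G - S - v`; so `od` grows by at least one and `df` does not drop,
hence stays equal by maximality. Every component of `G - S - v` without a perfect matching lies
in an `S`-component without one, and `v` is no longer counted, so `Df` strictly drops,
contradicting minimality.
-/

lemma even_ncard_sUnion {α : Type*} [Finite α] {𝒜 : Set (Set α)} (h𝒜 : 𝒜.PairwiseDisjoint id)
    (heven : ∀ A ∈ 𝒜, Even A.ncard) : Even (⋃₀ 𝒜).ncard := by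
  have hcard : (⋃₀ 𝒜).ncard = ∑ᶠ A ∈ 𝒜, A.ncard := by
    simpa [Set.sUnion_eq_biUnion] using
      (Set.toFinite 𝒜).ncard_biUnion (fun _ _ => Set.toFinite _) h𝒜
  rw [hcard]
  exact finsum_mem_induction Even Even.zero (fun _ _ => Even.add) heven

section Components

-- Rebinding `V` keeps the ambient `[Fintype V] [DecidableEq V]` out of these lemmas.
variable {V : Type*} {G : SimpleGraph V} {B B' A A' : Set V}

lemma mem_compSupp_iff {c : (G.induce B).ConnectedComponent} {x : V} :
    x ∈ compSupp G B c ↔ ∃ hx : x ∈ B, (G.induce B).connectedComponentMk ⟨x, hx⟩ = c :=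
  ⟨fun ⟨a, ha, hax⟩ => hax ▸ ⟨a.2, ha⟩, fun ⟨hx, h⟩ => ⟨⟨x, hx⟩, h, rfl⟩⟩

lemma compSupp_injective : Function.Injective (compSupp G B) := by
  intro c c' h
  obtain ⟨a, rfl⟩ := c.exists_rep
  have ha : (a : V) ∈ compSupp G B c' := h ▸ ⟨a, rfl, rfl⟩
  obtain ⟨_, rfl⟩ := mem_compSupp_iff.mp ha
  rfl

lemma SimpleGraph.Walk.reachable_induce_of_support_subset {a b : B}
    (p : (G.induce B).Walk a b) (hp : ∀ z ∈ p.support, (z : V) ∈ B') :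
    (G.induce B').Reachable ⟨a, hp a p.start_mem_support⟩ ⟨b, hp b p.end_mem_support⟩ := by
  have hp' : ∀ x ∈ (p.map (Embedding.induce B).toHom).support, x ∈ B' := by
    intro x hx
    rw [Walk.support_map, List.mem_map] at hx
    obtain ⟨z, hz, rfl⟩ := hx
    exact hp z hz
  exact ((p.map (Embedding.induce B).toHom).induce B' hp').reachable

namespace IsCompOf

lemma nonempty (hA : IsCompOf G B A) : A.Nonempty := by
  obtain ⟨c, rfl⟩ := hA
  obtain ⟨a, ha⟩ := c.exists_rep
  exact ⟨a, a, ha, rfl⟩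

lemma subset (hA : IsCompOf G B A) : A ⊆ B := by
  obtain ⟨c, rfl⟩ := hA
  rintro _ ⟨a, _, rfl⟩
  exact a.2

lemma exists_mem {x : V} (hx : x ∈ B) : ∃ A, IsCompOf G B A ∧ x ∈ A :=
  ⟨_, ⟨(G.induce B).connectedComponentMk ⟨x, hx⟩, rfl⟩, ⟨x, hx⟩, rfl, rfl⟩

lemma eq_of_mem (hA : IsCompOf G B A) (hA' : IsCompOf G B A') {x : V} (hxA : x ∈ A)
    (hxA' : x ∈ A') : A = A' := by
  obtain ⟨c, rfl⟩ := hA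
  obtain ⟨c', rfl⟩ := hA'
  obtain ⟨_, rfl⟩ := mem_compSupp_iff.mp hxA
  obtain ⟨_, rfl⟩ := mem_compSupp_iff.mp hxA'
  rfl

lemma disjoint (hA : IsCompOf G B A) (hA' : IsCompOf G B A') (h : A ≠ A') : Disjoint A A' :=
  Set.disjoint_left.mpr fun _ hxA hxA' => h (hA.eq_of_mem hA' hxA hxA')

lemma exists_superset (hB : B' ⊆ B) (hA : IsCompOf G B' A) :
    ∃ A', IsCompOf G B A' ∧ A ⊆ A' := by
  obtain ⟨d, rfl⟩ := hA
  refine ⟨_, ⟨d.map (G.induceHomOfLE hB).toHom, rfl⟩, ?_⟩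
  rintro _ ⟨a, rfl, rfl⟩
  refine ⟨Set.inclusion hB a, ?_, rfl⟩
  rw [ConnectedComponent.mem_supp_iff, ConnectedComponent.map_mk]
  rfl

lemma of_subset (hB : B' ⊆ B) (hA : IsCompOf G B A) (hAB' : A ⊆ B') : IsCompOf G B' A := by
  obtain ⟨x, hx⟩ := hA.nonempty
  refine ⟨(G.induce B').connectedComponentMk ⟨x, hAB' hx⟩, Set.Subset.antisymm ?_ ?_⟩
  · classical
    obtain ⟨c, rfl⟩ := hA
    intro y hy
    obtain ⟨hxB, hxc⟩ := mem_compSupp_iff.mp hx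
    obtain ⟨hyB, hyc⟩ := mem_compSupp_iff.mp hy
    obtain ⟨p⟩ := ConnectedComponent.exact (hxc.trans hyc.symm)
    have hp : ∀ z ∈ p.support, (z : V) ∈ B' := fun z hz =>
      hAB' ⟨z, (ConnectedComponent.sound (p.takeUntil z hz).reachable).symm.trans hxc, rfl⟩
    exact ⟨⟨y, hAB' hy⟩, (ConnectedComponent.sound
      (p.reachable_induce_of_support_subset hp)).symm, rfl⟩
  · obtain ⟨A', hA', hsub⟩ := exists_superset hB ⟨_, rfl⟩
    rwa [hA.eq_of_mem hA' hx (hsub ⟨⟨x, hAB' hx⟩, rfl, rfl⟩)]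

lemma subset_of_mem (hB : B' ⊆ B) (hA : IsCompOf G B' A) (hA' : IsCompOf G B A') {x : V}
    (hxA : x ∈ A) (hxA' : x ∈ A') : A ⊆ A' := by
  obtain ⟨A'', hA'', hAA''⟩ := hA.exists_superset hB
  rwa [hA'.eq_of_mem hA'' hxA' (hAA'' hxA)]

lemma eq_of_subset_of_subset (hB : B' ⊆ B) (hA : IsCompOf G B' A) (hA' : IsCompOf G B A')
    (hAA' : A ⊆ A') (hA'B' : A' ⊆ B') : A = A' :=
  let ⟨_, hx⟩ := hA.nonempty
  hA.eq_of_mem (hA'.of_subset hB hA'B') hx (hAA' hx)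

variable {C : Set V} {v : V}

lemma subset_diff_singleton (hA : IsCompOf G B A) (hC : IsCompOf G B C) (hv : v ∈ C)
    (hAC : A ≠ C) : A ⊆ B \ {v} :=
  fun _ hx => ⟨hA.subset hx, fun hxv => (hA.disjoint hC hAC).notMem_of_mem_right hv (hxv ▸ hx)⟩

lemma diff_singleton (hA : IsCompOf G B A) (hC : IsCompOf G B C) (hv : v ∈ C) (hAC : A ≠ C) :
    IsCompOf G (B \ {v}) A :=
  hA.of_subset Set.sdiff_subset (hA.subset_diff_singleton hC hv hAC)

lemma sUnion_diff_singleton (hC : IsCompOf G B C) :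
    ⋃₀ {A | IsCompOf G (B \ {v}) A ∧ A ⊆ C} = C \ {v} := by
  ext x
  constructor
  · rintro ⟨A, ⟨hA, hAC⟩, hx⟩
    exact ⟨hAC hx, (hA.subset hx).2⟩
  · rintro ⟨hxC, hxv⟩
    obtain ⟨A, hA, hxA⟩ := exists_mem (G := G) (B := B \ {v}) ⟨hC.subset hxC, hxv⟩
    exact ⟨A, ⟨hA, hA.subset_of_mem Set.sdiff_subset hC hxA hxC⟩, hxA⟩

lemma pairwiseDisjoint : {A | IsCompOf G B A}.PairwiseDisjoint id :=
  fun _ hA _ hA' h => hA.disjoint hA' h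

lemma exists_odd_diff_singleton [Finite V] (hC : IsCompOf G B C) (hv : v ∈ C)
    (heven : Even C.ncard) : ∃ A, IsCompOf G (B \ {v}) A ∧ A ⊆ C ∧ Odd A.ncard := by
  by_contra! hall
  have hodd : Odd (C \ {v}).ncard := by
    rw [Set.ncard_sdiff_singleton_of_mem hv]
    exact Nat.Even.sub_odd ((Set.ncard_pos (Set.toFinite C)).mpr ⟨v, hv⟩) heven odd_one
  rw [← hC.sUnion_diff_singleton] at hodd
  refine Nat.not_even_iff_odd.mpr hodd (even_ncard_sUnion ?_ ?_)
  · exact pairwiseDisjoint.subset fun A hA => hA.1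
  · exact fun A ⟨hA, hAC⟩ => Nat.not_odd_iff_even.mp (hall A hA hAC)

end IsCompOf

lemma setOf_isCompOf_and (G : SimpleGraph V) (B : Set V) (P : Set V → Prop) :
    {A | IsCompOf G B A ∧ P A} = compSupp G B '' {c | P (compSupp G B c)} := by
  ext A
  constructor
  · rintro ⟨⟨c, rfl⟩, hc⟩
    exact ⟨c, hc, rfl⟩
  · rintro ⟨c, hc, rfl⟩
    exact ⟨⟨c, rfl⟩, hc⟩

lemma oddComps_eq_ncard (G : SimpleGraph V) (B : Set V) :
    oddComps G B = {A | IsCompOf G B A ∧ Odd A.ncard}.ncard := by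
  rw [setOf_isCompOf_and, Set.ncard_image_of_injective _ compSupp_injective]
  rfl

lemma Df_eq_ncard_sUnion (G : SimpleGraph V) (S : Set V) :
    Df G S = (⋃₀ {A | IsCompOf G Sᶜ A ∧ ¬ HasPM G A}).ncard := by
  rw [setOf_isCompOf_and, Set.sUnion_image]
  rfl

lemma oddComps_lt_oddComps_diff_singleton [Finite V] {C : Set V} {v : V}
    (hC : IsCompOf G B C) (hv : v ∈ C) (heven : Even C.ncard) :
    oddComps G B < oddComps G (B \ {v}) := by
  rw [oddComps_eq_ncard, oddComps_eq_ncard]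
  obtain ⟨A₀, hA₀, hA₀C, hA₀odd⟩ := hC.exists_odd_diff_singleton hv heven
  refine Set.ncard_lt_ncard ((Set.ssubset_iff_of_subset ?_).mpr ⟨A₀, ⟨hA₀, hA₀odd⟩, ?_⟩)
  · rintro A ⟨hA, hAodd⟩
    refine ⟨hA.diff_singleton hC hv ?_, hAodd⟩
    rintro rfl
    exact Nat.not_even_iff_odd.mpr hAodd heven
  · rintro ⟨hA₀B, -⟩
    obtain ⟨x, hx⟩ := hA₀.nonempty
    have : A₀ = C := hA₀B.eq_of_mem hC hx (hA₀C hx)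
    exact (hA₀.subset (this ▸ hv)).2 rfl

lemma compl_insert_eq_diff_singleton (v : V) (S : Set V) : (insert v S)ᶜ = Sᶜ \ {v} := by
  ext
  simp [and_comm]

lemma df_le_df_insert [Finite V] {S C : Set V} {v : V} (hC : IsCompOf G Sᶜ C) (hv : v ∈ C)
    (heven : Even C.ncard) : df G S ≤ df G (insert v S) := by
  have hodd := oddComps_lt_oddComps_diff_singleton hC hv heven
  have hvS : v ∉ S := hC.subset hv
  rw [df, df, compl_insert_eq_diff_singleton, Set.ncard_insert_of_notMem hvS]
  push_cast
  omega

lemma Df_insert_lt [Finite V] {S C : Set V} {v : V} (hC : IsCompOf G Sᶜ C) (hv : v ∈ C)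
    (hPM : ¬ HasPM G C) : Df G (insert v S) < Df G S := by
  rw [Df_eq_ncard_sUnion, Df_eq_ncard_sUnion, compl_insert_eq_diff_singleton]
  refine (Set.ncard_le_ncard ?_).trans_lt
    (Set.ncard_sdiff_singleton_lt_of_mem (Set.mem_sUnion_of_mem hv ⟨hC, hPM⟩))
  rintro x ⟨A, ⟨hA, hAPM⟩, hxA⟩
  obtain ⟨A', hA', hAA'⟩ := hA.exists_superset Set.sdiff_subset
  refine ⟨⟨A', ⟨hA', ?_⟩, hAA' hxA⟩, (hA.subset hxA).2⟩
  by_cases hA'C : A' = C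
  · exact hA'C ▸ hPM
  · rwa [← hA.eq_of_subset_of_subset Set.sdiff_subset hA' hAA'
      (hA'.subset_diff_singleton hC hv hA'C)]

end Components

/-- If `S` maximizes `df` and, among such sets, minimizes `Df`, then every even
`S`-component has a perfect matching. -/
theorem stmt_3 (G : SimpleGraph V) (S : Set V)
    (hmax : ∀ T : Set V, df G T ≤ df G S)
    (hmin : ∀ T : Set V, df G T = df G S → Df G S ≤ Df G T) :
    ∀ c : (G.induce Sᶜ).ConnectedComponent,
      Even (compSupp G Sᶜ c).ncard → HasPM G (compSupp G Sᶜ c) := by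
  intro c hc
  by_contra hPM
  have hC : IsCompOf G Sᶜ (compSupp G Sᶜ c) := ⟨c, rfl⟩
  obtain ⟨v, hv⟩ := hC.nonempty
  have hdf : df G (insert v S) = df G S := le_antisymm (hmax _) (df_le_df_insert hC hv hc)
  exact (Df_insert_lt hC hv hPM).not_ge (hmin _ hdf)
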